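/- arXiv:2601.17960 — 3 statements merged into one kernel-verified Lean document; each statement's English description precedes it below -/
import Mathlib

section
/- Let Φ : Matrix n n ℂ →ₗ[ℂ] Matrix m m ℂ be a linear map that is positive (it maps every positive semidefinite matrix to a positive semidefinite matrix) and trace-preserving (trace(Φ A) = trace A for every A). Then for every Hermitian matrix H ∈ Matrix n n ℂ, ‖Φ H‖₁ ≤ ‖H‖₁. -/
/-!
Split the Hermitian matrix `H = H⁺ - H⁻` into its positive and negative parts, so that
`‖H‖₁ = tr H⁺ + tr H⁻`. Then `Φ H = Φ H⁺ - Φ H⁻` is again a difference of positive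
semidefinite matrices with the same traces, and any such difference `A - B` satisfies
`‖A - B‖₁ ≤ tr A + tr B`: with `S = sign (A - B)` one has `|A - B| = S (A - B)` and
`-1 ≤ S ≤ 1`, while `tr (X Y) ≥ 0` for positive semidefinite `X`, `Y`.
-/

open scoped ComplexOrder

/-- The trace norm `‖A‖₁` of a complex matrix `A`: the trace of the positive
semidefinite square root of `Aᴴ * A`. -/
noncomputable def traceNorm {n : Type*} [Fintype n] [DecidableEq n] (A : Matrix n n ℂ) : ℝ :=
  ((Matrix.posSemidef_conjTranspose_mul_self A).1.eigenvectorUnitary.1 *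
    Matrix.diagonal (((↑) : ℝ → ℂ) ∘ (Real.sqrt ·) ∘
      (Matrix.posSemidef_conjTranspose_mul_self A).1.eigenvalues) *
    (star (Matrix.posSemidef_conjTranspose_mul_self A).1.eigenvectorUnitary :
      Matrix n n ℂ)).trace.re

open scoped MatrixOrder

namespace Matrix

variable {n 𝕜 : Type*} [Fintype n] [DecidableEq n] [RCLike 𝕜]

lemma trace_mul_nonneg {A B : Matrix n n 𝕜} (hA : 0 ≤ A) (hB : 0 ≤ B) : 0 ≤ (A * B).trace := by
  have hconj : 0 ≤ CFC.sqrt A * B * CFC.sqrt A :=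
    (CFC.sqrt_nonneg A).isSelfAdjoint.conjugate_nonneg hB
  calc (0 : 𝕜) ≤ (CFC.sqrt A * B * CFC.sqrt A).trace :=
        (nonneg_iff_posSemidef.1 hconj).trace_nonneg
    _ = (A * B).trace := by rw [trace_mul_cycle, CFC.sqrt_mul_sqrt_self A hA]

lemma trace_mul_le_trace {S A : Matrix n n 𝕜} (hS : S ≤ 1) (hA : 0 ≤ A) :
    (S * A).trace ≤ A.trace := by
  have := trace_mul_nonneg (sub_nonneg.2 hS) hA
  rwa [Matrix.sub_mul, Matrix.one_mul, trace_sub, sub_nonneg] at this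

lemma trace_abs_sub_le {A B : Matrix n n 𝕜} (hA : 0 ≤ A) (hB : 0 ≤ B) :
    (CFC.abs (A - B)).trace ≤ A.trace + B.trace := by
  set M := A - B
  set S := cfc (fun x : ℝ => (SignType.sign x : ℝ)) M
  have habs : CFC.abs M = S * M := by
    conv_rhs => rw [← cfc_id' ℝ M]
    rw [CFC.abs_eq_cfc_norm M, ← cfc_mul _ _ M (M.finite_real_spectrum.continuousOn _)
      (M.finite_real_spectrum.continuousOn _)]
    exact cfc_congr fun x _ => by rw [Real.norm_eq_abs, sign_mul_self]
  have hsign (x : ℝ) : |(SignType.sign x : ℝ)| ≤ 1 := by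
    rcases lt_trichotomy x 0 with h | h | h <;> simp [h]
  have hS : S ≤ 1 := cfc_le_one _ M fun x _ => (abs_le.1 (hsign x)).2
  have hnegS : -S ≤ 1 := by
    rw [← cfc_neg]
    exact cfc_le_one _ M fun x _ => neg_le.2 (abs_le.1 (hsign x)).1
  calc (CFC.abs M).trace = (S * A).trace + (-S * B).trace := by
        rw [habs, Matrix.mul_sub, trace_sub, Matrix.neg_mul, trace_neg, sub_eq_add_neg]
    _ ≤ A.trace + B.trace := add_le_add (trace_mul_le_trace hS hA) (trace_mul_le_trace hnegS hB)

end Matrix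

lemma traceNorm_eq_re_trace_abs {n : Type*} [Fintype n] [DecidableEq n] (A : Matrix n n ℂ) :
    traceNorm A = (CFC.abs A).trace.re := by
  have hAA := Matrix.posSemidef_conjTranspose_mul_self A
  rw [CFC.abs, Matrix.star_eq_conjTranspose,
    CFC.sqrt_eq_real_sqrt _ (Matrix.nonneg_iff_posSemidef.2 hAA), cfcₙ_eq_cfc, hAA.1.cfc_eq]
  -- `IsHermitian.cfc` unfolds to the spectral formula `U * diagonal _ * star U` of `traceNorm`
  rfl

/-- Contractivity of the trace norm under positive trace-preserving linear maps,
on Hermitian matrices. -/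
theorem traceNorm_le_of_positive_tracePreserving
    {n m : Type*} [Fintype n] [DecidableEq n] [Fintype m] [DecidableEq m]
    (Φ : Matrix n n ℂ →ₗ[ℂ] Matrix m m ℂ)
    (hpos : ∀ A : Matrix n n ℂ, A.PosSemidef → (Φ A).PosSemidef)
    (htr : ∀ A : Matrix n n ℂ, (Φ A).trace = A.trace)
    (H : Matrix n n ℂ) (hH : H.IsHermitian) :
    traceNorm (Φ H) ≤ traceNorm H := by
  have hΦ {A : Matrix n n ℂ} (hA : 0 ≤ A) : 0 ≤ Φ A :=
    Matrix.nonneg_iff_posSemidef.2 (hpos A (Matrix.nonneg_iff_posSemidef.1 hA))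
  have hsplit : Φ H = Φ H⁺ - Φ H⁻ := by
    rw [← map_sub, CFC.posPart_sub_negPart H hH.isSelfAdjoint]
  have hle : (CFC.abs (Φ H)).trace ≤ (CFC.abs H).trace := calc
    (CFC.abs (Φ H)).trace ≤ (Φ H⁺).trace + (Φ H⁻).trace := by
      rw [hsplit]
      exact Matrix.trace_abs_sub_le (hΦ (CFC.posPart_nonneg H)) (hΦ (CFC.negPart_nonneg H))
    _ = (CFC.abs H).trace := by
      rw [htr, htr, ← Matrix.trace_add, CFC.posPart_add_negPart H hH.isSelfAdjoint]
  rw [traceNorm_eq_re_trace_abs, traceNorm_eq_re_trace_abs]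
  exact (Complex.le_def.1 hle).1
end

section
/- Fix L : ℕ, a finite type C and a finite dimension type d. The ideal map R, sending ρ : K × K × C → Matrix d d ℂ to (R ρ)(k_A, k_B, c) = w(k_A, k_B) • ∑ over pairs (k'_A, k'_B) with len k'_A = len k_A and len k'_B = len k_B of ρ(k'_A, k'_B, c), is positive (if every ρ(k_A, k_B, c) is positive semidefinite then so is every (R ρ)(k_A, k_B, c)) and total-trace-preserving (∑ over (k_A, k_B, c) of trace((R ρ)(k_A, k_B, c)) equals ∑ over (k_A, k_B, c) of trace(ρ(k_A, k_B, c))). -/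
open scoped ComplexOrder

/-- The key alphabet: keys of length `l ≤ L`, i.e. pairs of a length `l : Fin (L+1)`
and a bitstring of that length. -/
abbrev Key (L : ℕ) := Σ l : Fin (L+1), (Fin (l : ℕ) → Bool)

/-- The length of a key. -/
def lenKey {L : ℕ} (k : Key L) : Fin (L+1) := k.1

/-- The unique key of length `0` (the abort symbol `⊥`). -/
def botKey (L : ℕ) : Key L := ⟨0, fun _ => false⟩

/-- The ideal-key weight `w(k_A, k_B)`: `2^(-len k_A)` if the lengths agree and
`k_A = k_B`, `0` if the lengths agree but `k_A ≠ k_B`, and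
`2^(-(len k_A + len k_B))` if the lengths differ. -/
noncomputable def idealWt {L : ℕ} (kA kB : Key L) : ℝ :=
  if lenKey kA = lenKey kB then
    (if kA = kB then (2:ℝ) ^ (-((lenKey kA : ℕ) : ℤ)) else 0)
  else (2:ℝ) ^ (-(((lenKey kA : ℕ) : ℤ) + ((lenKey kB : ℕ) : ℤ)))

/-- The ideal map `R`, acting per value of the additional classical index `c`:
it replaces the key registers by ideal keys, weighting by `idealWt` and summing the
input state over all key pairs with the same pair of lengths. -/
noncomputable def idealMap {L : ℕ} {C d : Type*}
    (ρ : Key L × Key L × C → Matrix d d ℂ) : Key L × Key L × C → Matrix d d ℂ :=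
  fun p => idealWt p.1 p.2.1 •
    ∑ q : Key L × Key L,
      if lenKey q.1 = lenKey p.1 ∧ lenKey q.2 = lenKey p.2.1
        then ρ (q.1, q.2, p.2.2) else 0

/-!
For each classical value `c`, the block `(R ρ)(p, c)` is the combination
`∑ q, T p q • ρ(q, c)` over key pairs `q`, where `T = idealKeyKernel` gives weight `w p` to the
pairs `q` with the same key lengths as `p` and `0` to all others. Since `T ≥ 0`, positivity is
inherited from the blocks of `ρ`. Trace preservation amounts to `∑ p, T p q = 1` for every `q`:
for equal lengths `l` the weight `2^(-l)` sits on the `2^l` diagonal pairs, and for lengths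
`l₁ ≠ l₂` the weight `2^(-(l₁+l₂))` on all `2^(l₁+l₂)` pairs.
-/

section WeightedSum

variable {ι κ d : Type*}

theorem Matrix.posSemidef_sum_real_smul (s : Finset ι) {w : ι → ℝ} {A : ι → Matrix d d ℂ}
    (hw : ∀ i ∈ s, 0 ≤ w i) (hA : ∀ i ∈ s, (A i).PosSemidef) :
    (∑ i ∈ s, w i • A i).PosSemidef :=
  Matrix.posSemidef_sum s fun i hi => (hA i hi).smul (hw i hi)

theorem Matrix.sum_trace_sum_smul_of_sum_eq_one [Fintype ι] [Fintype κ] [Fintype d]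
    {T : κ → ι → ℝ} (hT : ∀ i, ∑ k, T k i = 1) (A : ι → Matrix d d ℂ) :
    ∑ k, (∑ i, T k i • A i).trace = ∑ i, (A i).trace := by
  simp only [Matrix.trace_sum, Matrix.trace_smul]
  rw [Finset.sum_comm]
  simp only [← Finset.sum_smul, hT, one_smul]

end WeightedSum

section KeyWeights

variable {L : ℕ}

theorem sum_ite_lenKey_eq {M : Type*} [AddCommMonoid M] (l : Fin (L + 1)) (f : Key L → M) :
    ∑ k : Key L, (if lenKey k = l then f k else 0) = ∑ s : Fin l → Bool, f ⟨l, s⟩ := by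
  rw [Fintype.sum_sigma, Fintype.sum_eq_single l fun a ha => by simp [lenKey, ha]]
  simp [lenKey]

theorem idealWt_nonneg (kA kB : Key L) : 0 ≤ idealWt kA kB := by
  unfold idealWt
  split_ifs <;> positivity

theorem idealWt_mk_mk_self (l : Fin (L + 1)) (s t : Fin l → Bool) :
    idealWt (⟨l, s⟩ : Key L) ⟨l, t⟩ = if s = t then (2 : ℝ) ^ (-(l : ℤ)) else 0 := by
  simp [idealWt, lenKey]

theorem idealWt_mk_mk_of_ne {l₁ l₂ : Fin (L + 1)} (h : l₁ ≠ l₂) (s : Fin l₁ → Bool)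
    (t : Fin l₂ → Bool) :
    idealWt (⟨l₁, s⟩ : Key L) ⟨l₂, t⟩ = (2 : ℝ) ^ (-(l₁ : ℤ)) * (2 : ℝ) ^ (-(l₂ : ℤ)) := by
  simp [idealWt, lenKey, h, zpow_add₀, mul_comm]

theorem sum_idealWt_mk_mk (l₁ l₂ : Fin (L + 1)) :
    ∑ s : Fin l₁ → Bool, ∑ t : Fin l₂ → Bool, idealWt (⟨l₁, s⟩ : Key L) ⟨l₂, t⟩ = 1 := by
  by_cases h : l₁ = l₂
  · subst h
    simp [idealWt_mk_mk_self]
  · simp [idealWt_mk_mk_of_ne h]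
    field_simp

noncomputable def idealKeyKernel (p q : Key L × Key L) : ℝ :=
  if lenKey q.1 = lenKey p.1 ∧ lenKey q.2 = lenKey p.2 then idealWt p.1 p.2 else 0

theorem idealKeyKernel_nonneg (p q : Key L × Key L) : 0 ≤ idealKeyKernel p q := by
  unfold idealKeyKernel
  split_ifs
  exacts [idealWt_nonneg _ _, le_rfl]

theorem sum_idealKeyKernel (q : Key L × Key L) : ∑ p, idealKeyKernel p q = 1 := by
  simp only [idealKeyKernel, Fintype.sum_prod_type, ite_and, eq_comm (a := lenKey q.1),
    eq_comm (a := lenKey q.2), ← Finset.ite_sum_zero, sum_ite_lenKey_eq]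
  exact sum_idealWt_mk_mk _ _

end KeyWeights

theorem idealMap_apply {L : ℕ} {C d : Type*} (ρ : Key L × Key L × C → Matrix d d ℂ)
    (kA kB : Key L) (c : C) :
    idealMap ρ (kA, kB, c) = ∑ q, idealKeyKernel (kA, kB) q • ρ (q.1, q.2, c) := by
  simp only [idealMap, idealKeyKernel, Finset.smul_sum, ite_smul, zero_smul, smul_ite, smul_zero]

theorem idealMap_positive_and_tracePreserving_general (L : ℕ) (C d : Type*) [Fintype C]
    [Fintype d] :
    (∀ ρ : Key L × Key L × C → Matrix d d ℂ,
        (∀ p, (ρ p).PosSemidef) → ∀ p, ((idealMap ρ) p).PosSemidef) ∧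
    (∀ ρ : Key L × Key L × C → Matrix d d ℂ,
        ∑ p : Key L × Key L × C, ((idealMap ρ) p).trace =
          ∑ p : Key L × Key L × C, (ρ p).trace) := by
  refine ⟨fun ρ hρ ⟨kA, kB, c⟩ => ?_, fun ρ => ?_⟩
  · rw [idealMap_apply]
    exact Matrix.posSemidef_sum_real_smul _ (fun q _ => idealKeyKernel_nonneg _ q)
      fun q _ => hρ _
  · have sum_by_class (f : Key L × Key L × C → ℂ) :
        ∑ p, f p = ∑ c, ∑ k : Key L × Key L, f (k.1, k.2, c) := by
      rw [← (Equiv.prodAssoc _ _ _).sum_comp, Fintype.sum_prod_type_right]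
      rfl
    simp only [sum_by_class, idealMap_apply,
      Matrix.sum_trace_sum_smul_of_sum_eq_one sum_idealKeyKernel]

/-- The ideal map is positive (preserves positive semidefiniteness of all entries) and
total-trace-preserving. -/
theorem idealMap_positive_and_tracePreserving (L : ℕ) (C d : Type*) [Fintype C]
    [Fintype d] [DecidableEq d] :
    (∀ ρ : Key L × Key L × C → Matrix d d ℂ,
        (∀ p, (ρ p).PosSemidef) → ∀ p, ((idealMap ρ) p).PosSemidef) ∧
    (∀ ρ : Key L × Key L × C → Matrix d d ℂ,
        ∑ p : Key L × Key L × C, ((idealMap ρ) p).trace =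
          ∑ p : Key L × Key L × C, (ρ p).trace) :=
  idealMap_positive_and_tracePreserving_general L C d
end

section
/- Fix L : ℕ, finite types C' and finite dimension types d, d'. For each pair (l_A, l_B) ∈ Fin (L+1) × Fin (L+1) let Φ(l_A, l_B) : Matrix d d ℂ →ₗ[ℂ] (C' → Matrix d' d' ℂ) be a linear map. Define E on families ρ : K × K → Matrix d d ℂ by (E ρ)(k_A, k_B, c') = Φ(len k_A, len k_B)(ρ(k_A, k_B)) c'. Let R denote the ideal map on K × K-indexed families (acting per value of the additional classical index c' on the output side). Then E ∘ R = R ∘ E, i.e. for all ρ, E (R ρ) = R (E ρ). -/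
open scoped ComplexOrder

/-- The ideal map `R` on families indexed only by the two key registers. -/
noncomputable def idealMapKK {L : ℕ} {d : Type*}
    (ρ : Key L × Key L → Matrix d d ℂ) : Key L × Key L → Matrix d d ℂ :=
  fun p => idealWt p.1 p.2 •
    ∑ q : Key L × Key L,
      if lenKey q.1 = lenKey p.1 ∧ lenKey q.2 = lenKey p.2 then ρ q else 0

/-- The key-length-conditioned communication channel determined by the family `Φ`:
its action on the non-key registers depends only on the lengths of the two keys. -/
def commMap {L : ℕ} {C' d d' : Type*}
    (Φ : Fin (L+1) × Fin (L+1) → (Matrix d d ℂ →ₗ[ℂ] (C' → Matrix d' d' ℂ)))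
    (ρ : Key L × Key L → Matrix d d ℂ) : Key L × Key L × C' → Matrix d' d' ℂ :=
  fun p => Φ (lenKey p.1, lenKey p.2.1) (ρ (p.1, p.2.1)) p.2.2

/-! The ideal map only mixes key pairs with the same pair of lengths, and on all of them the
channel acts by the single linear map `Φ (len k_A, len k_B)`, which therefore passes through the
weighted sum defining `R`. -/

section

variable {L : ℕ} {C' d d' : Type*}
  (Φ : Fin (L+1) × Fin (L+1) → (Matrix d d ℂ →ₗ[ℂ] (C' → Matrix d' d' ℂ)))
  (ρ : Key L × Key L → Matrix d d ℂ)

lemma commMap_apply_of_lenKey_eq {kA kB k₁ k₂ : Key L} (c : C')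
    (h₁ : lenKey k₁ = lenKey kA) (h₂ : lenKey k₂ = lenKey kB) :
    commMap Φ ρ (k₁, k₂, c) = Φ (lenKey kA, lenKey kB) (ρ (k₁, k₂)) c := by
  simp only [commMap, h₁, h₂]

lemma commMap_idealMapKK_apply (kA kB : Key L) (c : C') :
    commMap Φ (idealMapKK ρ) (kA, kB, c) = idealWt kA kB •
      ∑ q : Key L × Key L, if lenKey q.1 = lenKey kA ∧ lenKey q.2 = lenKey kB
        then Φ (lenKey kA, lenKey kB) (ρ q) c else 0 := by
  simp only [commMap, idealMapKK, LinearMap.map_smul_of_tower, map_sum, Pi.smul_apply,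
    Finset.sum_apply, apply_ite, ite_apply, map_zero, Pi.zero_apply]

end

/-- A communication channel whose action depends only on the key lengths, and acts only
on the non-key registers, commutes with the ideal map. -/
theorem commMap_comm_idealMap (L : ℕ) (C' d d' : Type*)
    (Φ : Fin (L+1) × Fin (L+1) → (Matrix d d ℂ →ₗ[ℂ] (C' → Matrix d' d' ℂ)))
    (ρ : Key L × Key L → Matrix d d ℂ) :
    commMap Φ (idealMapKK ρ) = idealMap (commMap Φ ρ) := by
  funext ⟨kA, kB, c⟩
  rw [commMap_idealMapKK_apply, idealMap]
  congr 1
  refine Finset.sum_congr rfl fun q _ => ?_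
  split_ifs with h
  · rw [commMap_apply_of_lenKey_eq Φ ρ c h.1 h.2]
  · rfl
end
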